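/- For integers m ≥ 0 and n, k, s ≥ 1, one has x₀^m ш (x₁^n x₀^k x₁^s) = Σ_{m₁+m₂+m₃=m, m_i ≥ 0} C(m₂+k-1, k-1) · 𝔅_{n}^{m₁} x₁ x₀^{m₂+k} 𝔅_{s+1}^{m₃}, an identity of multisets of words, where a binomial coefficient c multiplying a multiset means the multiset repeated c times. -/

import Mathlib

/-- The shuffle product of two words, as a multiset of words. -/
def shuffle {X : Type*} : List X → List X → Multiset (List X)
  | u, [] => {u}
  | [], v => {v}
  | a :: u, b :: v =>
      (shuffle u (b :: v)).map (a :: ·) + (shuffle (a :: u) v).map (b :: ·)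
termination_by u v => u.length + v.length

/-- The two-letter alphabet `X = {x₀, x₁}`. -/
def x0 : Bool := false
def x1 : Bool := true

/-- `𝔅_r^m`: the multiset of all words `x₀^{m₁} x₁ x₀^{m₂} x₁ ⋯ x₁ x₀^{m_r}`
with `m₁ + ⋯ + m_r = m`, `m_i ≥ 0`. -/
def B (r m : ℕ) : Multiset (List Bool) :=
  (Finset.Nat.antidiagonalTuple r m).val.map fun f =>
    List.intercalate [x1] (List.ofFn fun i => List.replicate (f i) x0)

/-- `S w T`: the multiset of all concatenations `u ++ w ++ v` with `u ∈ S`, `v ∈ T`,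
counted with multiplicity. -/
def msConcat {X : Type*} (S : Multiset (List X)) (w : List X) (T : Multiset (List X)) :
    Multiset (List X) :=
  S.bind fun u => T.map fun v => u ++ w ++ v

/-! An interleaving of `x₀^m` with `u y v` is cut by the letter `y` into an interleaving of
`x₀^a` with `u` and one of `x₀^b` with `v`, where `a + b = m`. Cutting `x₁^n x₀^k x₁^s` at the
last letter of `x₁^n` and then at the last letter of `x₀^k` writes the left side as
`Σ (x₀^a ш x₁^{n-1}) x₁ (x₀^c ш x₀^{k-1}) x₀ (x₀^e ш x₁^s)`, whose three factors are `𝔅_n^a`,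
`C(c+k-1, k-1) · x₀^{c+k-1}` and `𝔅_{s+1}^e`. -/

open Finset List

theorem Multiset.map_finset_sum {ι α β : Type*} (s : Finset ι) (F : ι → Multiset α)
    (f : α → β) : (∑ i ∈ s, F i).map f = ∑ i ∈ s, (F i).map f :=
  map_sum (Multiset.mapAddMonoidHom f) F s

theorem Finset.Nat.sum_antidiagonalTuple_succ {M : Type*} [AddCommMonoid M] (k n : ℕ)
    (F : (Fin (k + 1) → ℕ) → M) :
    ∑ f ∈ antidiagonalTuple (k + 1) n, F f =
      ∑ p ∈ antidiagonal n, ∑ g ∈ antidiagonalTuple k p.2, F (Fin.cons p.1 g) := by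
  have h : (antidiagonalTuple (k + 1) n).val =
      (antidiagonal n).val.bind fun p => (antidiagonalTuple k p.2).val.map (Fin.cons p.1) := by
    simp only [antidiagonalTuple, Multiset.Nat.antidiagonalTuple, List.Nat.antidiagonalTuple,
      ← Multiset.coe_bind]
    rfl
  rw [Finset.sum_eq_multiset_sum, h, Multiset.map_bind, Multiset.sum_bind,
    Finset.sum_eq_multiset_sum]
  simp only [Multiset.map_map]
  rfl

theorem Finset.Nat.sum_antidiagonalTuple_three {M : Type*} [AddCommMonoid M] (n : ℕ)
    (F : (Fin 3 → ℕ) → M) :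
    ∑ f ∈ antidiagonalTuple 3 n, F f =
      ∑ p ∈ antidiagonal n, ∑ q ∈ antidiagonal p.2, F ![p.1, q.1, q.2] := by
  simp only [sum_antidiagonalTuple_succ, antidiagonalTuple_one, sum_singleton]
  rfl

section Words

variable {X : Type*}

@[simp]
theorem shuffle_nil_right (u : List X) : shuffle u [] = {u} := by
  cases u <;> rw [shuffle]

@[simp]
theorem shuffle_nil_left (v : List X) : shuffle [] v = {v} := by
  cases v <;> simp [shuffle]

theorem shuffle_replicate_succ_cons (x b : X) (m : ℕ) (u : List X) :
    shuffle (replicate (m + 1) x) (b :: u) =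
      (shuffle (replicate m x) (b :: u)).map (x :: ·) +
        (shuffle (replicate (m + 1) x) u).map (b :: ·) := by
  rw [replicate_succ, shuffle]

theorem msConcat_singleton_left (u w : List X) (T : Multiset (List X)) :
    msConcat {u} w T = T.map (u ++ w ++ ·) := by
  simp [msConcat]

theorem msConcat_singleton_singleton (u w v : List X) :
    msConcat {u} w {v} = {u ++ w ++ v} := by
  simp [msConcat]

theorem msConcat_add_left (S S' : Multiset (List X)) (w : List X) (T : Multiset (List X)) :
    msConcat (S + S') w T = msConcat S w T + msConcat S' w T :=
  Multiset.add_bind ..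

theorem msConcat_nsmul_left (c : ℕ) (S : Multiset (List X)) (w : List X)
    (T : Multiset (List X)) : msConcat (c • S) w T = c • msConcat S w T := by
  simp [msConcat, Multiset.bind, Multiset.join, Multiset.map_nsmul, Multiset.sum_nsmul]

theorem msConcat_map_cons_left (a : X) (S : Multiset (List X)) (w : List X)
    (T : Multiset (List X)) :
    msConcat (S.map (a :: ·)) w T = (msConcat S w T).map (a :: ·) := by
  simp [msConcat, Multiset.map_bind, Multiset.bind_map]

def msConcatAddMonoidHom (S : Multiset (List X)) (w : List X) :
    Multiset (List X) →+ Multiset (List X) where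
  toFun := msConcat S w
  map_zero' := by simp [msConcat]
  map_add' T T' := by simp [msConcat, Multiset.bind_add]

theorem msConcat_sum_right {ι : Type*} (s : Finset ι) (S : Multiset (List X)) (w : List X)
    (T : ι → Multiset (List X)) :
    msConcat S w (∑ i ∈ s, T i) = ∑ i ∈ s, msConcat S w (T i) :=
  map_sum (msConcatAddMonoidHom S w) T s

theorem msConcat_nsmul_right (S : Multiset (List X)) (w : List X) (c : ℕ)
    (T : Multiset (List X)) : msConcat S w (c • T) = c • msConcat S w T :=
  map_nsmul (msConcatAddMonoidHom S w) c T

theorem msConcat_msConcat_singleton (S : Multiset (List X)) (w p w' : List X)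
    (T : Multiset (List X)) :
    msConcat S w (msConcat {p} w' T) = msConcat S (w ++ p ++ w') T := by
  simp [msConcat]

theorem shuffle_replicate_append_cons (x y : X) (m : ℕ) (u v : List X) :
    shuffle (replicate m x) (u ++ y :: v) =
      ∑ p ∈ antidiagonal m,
        msConcat (shuffle (replicate p.1 x) u) [y] (shuffle (replicate p.2 x) v) := by
  induction u generalizing m with
  | nil =>
    induction m with
    | zero => simp [msConcat]
    | succ m ih =>
      rw [nil_append] at ih ⊢
      rw [shuffle_replicate_succ_cons, ih, Finset.Nat.sum_antidiagonal_succ]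
      simp [msConcat_singleton_left, replicate_succ, Multiset.map_map, Multiset.map_finset_sum,
        add_comm]
  | cons b u ihu =>
    induction m with
    | zero => simp [msConcat]
    | succ m ihm =>
      rw [cons_append] at ihm ⊢
      rw [shuffle_replicate_succ_cons, ihm, ihu, Finset.Nat.sum_antidiagonal_succ,
        Finset.Nat.sum_antidiagonal_succ]
      simp only [shuffle_replicate_succ_cons, msConcat_add_left, msConcat_map_cons_left,
        Multiset.map_add, Multiset.map_finset_sum, sum_add_distrib, replicate_zero,
        shuffle_nil_left, msConcat_singleton_left, Multiset.map_map, Function.comp_def,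
        cons_append]
      abel

theorem shuffle_replicate_replicate (x : X) (a k : ℕ) :
    shuffle (replicate a x) (replicate k x) = (a + k).choose k • {replicate (a + k) x} := by
  induction a generalizing k with
  | zero => simp
  | succ a iha =>
    induction k with
    | zero => simp
    | succ k ihk =>
      rw [replicate_succ (a := x) (n := k), shuffle_replicate_succ_cons, ← replicate_succ, iha,
        ihk]
      simp only [Multiset.map_nsmul, Multiset.map_singleton, ← replicate_succ]
      rw [show a + 1 + (k + 1) = a + (k + 1) + 1 by omega, Nat.choose_succ_succ', add_nsmul,
        add_comm, show a + 1 + k = a + (k + 1) by omega]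

end Words

def blockWord {r : ℕ} (f : Fin r → ℕ) : List Bool :=
  intercalate [x1] (ofFn fun i => replicate (f i) x0)

theorem B_eq_sum (r m : ℕ) : B r m = ∑ f ∈ Finset.Nat.antidiagonalTuple r m, {blockWord f} := by
  rw [B, Finset.sum_eq_multiset_sum, ← Multiset.sum_map_singleton (Multiset.map _ _),
    Multiset.map_map]
  rfl

theorem blockWord_cons {r : ℕ} (a : ℕ) (g : Fin (r + 1) → ℕ) :
    blockWord (Fin.cons a g) = replicate a x0 ++ [x1] ++ blockWord g := by
  simp [blockWord, ofFn_succ, intercalate]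

theorem B_one (m : ℕ) : B 1 m = {replicate m x0} := by
  simp [B_eq_sum, blockWord]

theorem B_add_two (r m : ℕ) :
    B (r + 2) m = ∑ p ∈ antidiagonal m, msConcat {replicate p.1 x0} [x1] (B (r + 1) p.2) := by
  rw [B_eq_sum, Finset.Nat.sum_antidiagonalTuple_succ]
  simp only [B_eq_sum, msConcat_sum_right, blockWord_cons, msConcat_singleton_singleton]

theorem shuffle_replicate_x0_replicate_x1 (m r : ℕ) :
    shuffle (replicate m x0) (replicate r x1) = B (r + 1) m := by
  induction r generalizing m with
  | zero => simp [B_one]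
  | succ r ih =>
    rw [B_add_two, replicate_succ, ← nil_append (x1 :: _), shuffle_replicate_append_cons]
    simp [ih]

theorem shuffle_x0_pow_x1x0x1_general (m n k s : ℕ) (hn : 1 ≤ n) (hk : 1 ≤ k) :
    shuffle (List.replicate m x0)
        (List.replicate n x1 ++ List.replicate k x0 ++ List.replicate s x1) =
      ∑ f ∈ Finset.Nat.antidiagonalTuple 3 m,
        Nat.choose (f 1 + k - 1) (k - 1) •
          msConcat (B n (f 0)) (x1 :: List.replicate (f 1 + k) x0)
            (B (s + 1) (f 2)) := by
  obtain ⟨n, rfl⟩ : ∃ n', n = n' + 1 := ⟨n - 1, by omega⟩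
  obtain ⟨k, rfl⟩ : ∃ k', k = k' + 1 := ⟨k - 1, by omega⟩
  have split : replicate (n + 1) x1 ++ replicate (k + 1) x0 ++ replicate s x1 =
      replicate n x1 ++ x1 :: (replicate k x0 ++ x0 :: replicate s x1) := by
    simp [replicate_succ']
  rw [Finset.Nat.sum_antidiagonalTuple_three, split, shuffle_replicate_append_cons]
  refine sum_congr rfl fun p _ => ?_
  rw [shuffle_replicate_append_cons, msConcat_sum_right]
  refine sum_congr rfl fun q _ => ?_
  simp [shuffle_replicate_replicate, shuffle_replicate_x0_replicate_x1, msConcat_nsmul_left,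
    msConcat_nsmul_right, msConcat_msConcat_singleton, ← add_assoc, replicate_succ']

theorem shuffle_x0_pow_x1x0x1 (m n k s : ℕ) (hn : 1 ≤ n) (hk : 1 ≤ k) (hs : 1 ≤ s) :
    shuffle (List.replicate m x0)
        (List.replicate n x1 ++ List.replicate k x0 ++ List.replicate s x1) =
      ∑ f ∈ Finset.Nat.antidiagonalTuple 3 m,
        Nat.choose (f 1 + k - 1) (k - 1) •
          msConcat (B n (f 0)) (x1 :: List.replicate (f 1 + k) x0)
            (B (s + 1) (f 2)) :=
  shuffle_x0_pow_x1x0x1_general m n k s hn hk
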